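/- arXiv:2407.00307 — 3 statements merged into one kernel-verified Lean document; each statement's English description precedes it below -/
import Mathlib

section
/- Let X be a compact set, P(X) the space of Borel probability measures on X, and J: P(X) → ℝ convex with a von Mises derivative at μ* along every direction ν − μ* (ν ∈ P(X)), with influence function h_{μ*}(x) = lim_{t→0+} (1/t)(J(μ* + t(δ_x − μ*)) − J(μ*)). Then μ* is a global minimizer of J over P(X) if and only if h_{μ*}(x) ≥ 0 for all x ∈ X. -/
/-!
Testing the von Mises derivative against a Dirac mass `δ_x` shows that `h` has mean zero
under `μstar`, so the derivative in direction `ν - μstar` is just `∫ h dν`. If `μstar`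
minimizes `J`, every difference quotient towards `δ_x` is nonnegative, hence so is its limit
`h x`. Conversely, convexity bounds every difference quotient towards `ν` by `J ν - J μstar`,
so `0 ≤ ∫ h dν ≤ J ν - J μstar`.
-/

open MeasureTheory Filter Topology

lemma isProbabilityMeasure_ofReal_smul_add {Ω : Type*} [MeasurableSpace Ω]
    (μ ν : Measure Ω) [IsProbabilityMeasure μ] [IsProbabilityMeasure ν]
    {t : ℝ} (ht : t ∈ Set.Icc (0 : ℝ) 1) :
    IsProbabilityMeasure (ENNReal.ofReal (1 - t) • μ + ENNReal.ofReal t • ν) := by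
  constructor
  simp only [Measure.add_apply, Measure.smul_apply, measure_univ, smul_eq_mul, mul_one]
  rw [← ENNReal.ofReal_add (by linarith [ht.2]) ht.1]
  norm_num

/-- For non-measurable `f`, `∫ f ∂(dirac x) = f x` can fail at every `x`. -/
lemma MeasureTheory.AEStronglyMeasurable.ae_integral_dirac_eq {Ω E : Type*} [MeasurableSpace Ω]
    [NormedAddCommGroup E] [NormedSpace ℝ E] [CompleteSpace E] {μ : Measure Ω} {f : Ω → E}
    (hf : AEStronglyMeasurable f μ) : ∀ᵐ x ∂μ, ∫ y, f y ∂(Measure.dirac x) = f x := by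
  obtain ⟨g, hg, hfg⟩ := hf
  set N := toMeasurable μ {x | f x ≠ g x}
  have hN : μ N = 0 := by rw [measure_toMeasurable]; exact ae_iff.1 hfg
  filter_upwards [measure_eq_zero_iff_ae_notMem.1 hN] with x hx
  have hfgx : ∀ y ∉ N, f y = g y := fun y hy ↦
    not_not.1 fun hne ↦ hy (subset_toMeasurable μ _ hne)
  have hfg_dirac : f =ᵐ[Measure.dirac x] g :=
    (ae_dirac_iff (measurableSet_toMeasurable μ _).compl).2 hx |>.mono hfgx
  rw [integral_congr_ae hfg_dirac, integral_dirac' g x hg, hfgx x hx]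

lemma integral_eq_zero_of_forall_eq_integral_dirac_sub {Ω : Type*} [MeasurableSpace Ω]
    {μ : Measure Ω} [NeZero μ] {h : Ω → ℝ}
    (hh : ∀ x, h x = (∫ y, h y ∂(Measure.dirac x)) - ∫ y, h y ∂μ) :
    ∫ y, h y ∂μ = 0 := by
  by_cases hint : Integrable h μ
  · obtain ⟨x, hx⟩ := hint.aestronglyMeasurable.ae_integral_dirac_eq.exists
    linarith [hh x]
  · exact integral_undef hint

lemma ofReal_smul_add_slope_le {Ω : Type*} [MeasurableSpace Ω] (J : Measure Ω → ℝ)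
    (hconvex : ∀ (μ ν : Measure Ω), IsProbabilityMeasure μ → IsProbabilityMeasure ν →
      ∀ t : ℝ, t ∈ Set.Icc (0:ℝ) 1 →
      J (ENNReal.ofReal (1 - t) • μ + ENNReal.ofReal t • ν) ≤ (1 - t) * J μ + t * J ν)
    (μ ν : Measure Ω) [IsProbabilityMeasure μ] [IsProbabilityMeasure ν]
    {t : ℝ} (ht : t ∈ Set.Ioc (0 : ℝ) 1) :
    (J (ENNReal.ofReal (1 - t) • μ + ENNReal.ofReal t • ν) - J μ) / t ≤ J ν - J μ := by
  have hcv := hconvex μ ν inferInstance inferInstance t (Set.Ioc_subset_Icc_self ht)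
  rw [div_le_iff₀ ht.1]
  linarith

theorem stmt0_general {Ω : Type*} [MeasurableSpace Ω]
    (J : Measure Ω → ℝ) (μstar : Measure Ω) [IsProbabilityMeasure μstar]
    (h : Ω → ℝ)
    (hconvex : ∀ (μ ν : Measure Ω), IsProbabilityMeasure μ → IsProbabilityMeasure ν →
      ∀ t : ℝ, t ∈ Set.Icc (0:ℝ) 1 →
      J (ENNReal.ofReal (1 - t) • μ + ENNReal.ofReal t • ν) ≤ (1 - t) * J μ + t * J ν)
    (hinfl : ∀ x : Ω, Tendsto (fun t : ℝ =>
        (J (ENNReal.ofReal (1 - t) • μstar + ENNReal.ofReal t • Measure.dirac x) - J μstar) / t)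
      (𝓝[>] (0:ℝ)) (𝓝 (h x)))
    (hvonMises : ∀ ν : Measure Ω, IsProbabilityMeasure ν →
      Tendsto (fun t : ℝ =>
        (J (ENNReal.ofReal (1 - t) • μstar + ENNReal.ofReal t • ν) - J μstar) / t)
      (𝓝[>] (0:ℝ)) (𝓝 ((∫ x, h x ∂ν) - ∫ x, h x ∂μstar))) :
    (∀ ν : Measure Ω, IsProbabilityMeasure ν → J μstar ≤ J ν) ↔ (∀ x : Ω, 0 ≤ h x) := by
  have hIoc : Set.Ioc (0:ℝ) 1 ∈ 𝓝[>] (0:ℝ) := Ioc_mem_nhdsGT_of_mem (by norm_num)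
  have hmean : ∫ x, h x ∂μstar = 0 := integral_eq_zero_of_forall_eq_integral_dirac_sub
    fun x ↦ tendsto_nhds_unique (hinfl x) (hvonMises _ inferInstance)
  constructor
  · intro hmin x
    refine ge_of_tendsto (hinfl x) ?_
    filter_upwards [hIoc] with t ht
    have := hmin _ (isProbabilityMeasure_ofReal_smul_add μstar (Measure.dirac x) (Set.Ioc_subset_Icc_self ht))
    exact div_nonneg (sub_nonneg.2 this) ht.1.le
  · intro hpos ν hν
    have hslope : ∫ x, h x ∂ν - ∫ x, h x ∂μstar ≤ J ν - J μstar :=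
      le_of_tendsto (hvonMises ν hν)
        (eventually_of_mem hIoc fun _ ↦ ofReal_smul_add_slope_le J hconvex μstar ν)
    linarith [integral_nonneg (μ := ν) (f := h) hpos]

/-- Optimality conditions: for a convex `J` on the probability measures with von Mises
derivative at `μstar` with influence function `h`, `μstar` is a global minimizer
iff `h ≥ 0` everywhere. -/
theorem stmt0 {Ω : Type*} [MeasurableSpace Ω] [TopologicalSpace Ω] [CompactSpace Ω]
    [BorelSpace Ω]
    (J : Measure Ω → ℝ) (μstar : Measure Ω) [IsProbabilityMeasure μstar]
    (h : Ω → ℝ)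
    (hconvex : ∀ (μ ν : Measure Ω), IsProbabilityMeasure μ → IsProbabilityMeasure ν →
      ∀ t : ℝ, t ∈ Set.Icc (0:ℝ) 1 →
      J (ENNReal.ofReal (1 - t) • μ + ENNReal.ofReal t • ν) ≤ (1 - t) * J μ + t * J ν)
    (hinfl : ∀ x : Ω, Tendsto (fun t : ℝ =>
        (J (ENNReal.ofReal (1 - t) • μstar + ENNReal.ofReal t • Measure.dirac x) - J μstar) / t)
      (𝓝[>] (0:ℝ)) (𝓝 (h x)))
    (hvonMises : ∀ ν : Measure Ω, IsProbabilityMeasure ν →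
      Tendsto (fun t : ℝ =>
        (J (ENNReal.ofReal (1 - t) • μstar + ENNReal.ofReal t • ν) - J μstar) / t)
      (𝓝[>] (0:ℝ)) (𝓝 ((∫ x, h x ∂ν) - ∫ x, h x ∂μstar))) :
    (∀ ν : Measure Ω, IsProbabilityMeasure ν → J μstar ≤ J ν) ↔ (∀ x : Ω, 0 ≤ h x) :=
  stmt0_general J μstar h hconvex hinfl hvonMises
end

section
/- Suppose J: P(X) → ℝ is convex and L-smooth with influence function h_μ, and X is compact so that h_μ attains its minimum. Let μ_{k+1} = (1−η_k)μ_k + η_k δ_{x*(μ_k)} with x*(μ_k) ∈ argmin_{x∈X} h_{μ_k}(x) and η_k = 2/(k+2). Then J(μ_k) − J* ≤ 2LR²/(k+2) for all k ≥ 1, where J* = inf_{μ∈P(X)} J(μ) and R = sup{‖μ−ν‖_TV : μ, ν ∈ P(X)} ≤ 2. -/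
/-!
With `J* = inf J` and `e_k = J(μ_k) - J*`, convexity and the minimality of `x*(μ_k)` bound the
primal gap by the Frank–Wolfe gap: `e_k ≤ ∫ h_{μ_k} dμ_k - h_{μ_k}(x*(μ_k))`. The step moves
`μ_k` towards `δ_{x*}` by a total variation distance `η_k ‖μ_k - δ_{x*}‖_TV ≤ η_k R`, so the
smooth functional inequality gives `e_{k+1} ≤ (1 - η_k) e_k + L η_k² R² / 2`, and for
`η_k = 2/(k+2)` induction from `e_1 ≤ L R² / 2` yields `e_k ≤ 2 L R² / (k+2)`. With `tvDist` the
supremum over sets of `|μ(A) - ν(A)|`, even `R ≤ 1` holds.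
-/

open MeasureTheory Filter Topology

/-- Total variation distance `sup_A |μ(A) - ν(A)|` over measurable sets. -/
noncomputable def tvDist {Ω : Type*} [MeasurableSpace Ω] (μ ν : Measure Ω) : ℝ :=
  ⨆ A : {A : Set Ω // MeasurableSet A}, |(μ A.1).toReal - (ν A.1).toReal|

/- Unlike `integral_dirac`, this needs no `MeasurableSingletonClass`: `dirac a` gives mass one to
every set containing `a`, measurable or not. -/
theorem integral_dirac_of_aestronglyMeasurable {α E : Type*} [MeasurableSpace α]
    [NormedAddCommGroup E] [NormedSpace ℝ E] [CompleteSpace E] {f : α → E} {a : α}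
    (hf : AEStronglyMeasurable f (Measure.dirac a)) : ∫ x, f x ∂Measure.dirac a = f a := by
  obtain ⟨g, hg, hfg⟩ := hf
  have hfg_at : f a = g a := by
    by_contra hne
    have hnull : Measure.dirac a {x | f x ≠ g x} = 0 := ae_iff.mp hfg
    simp [Measure.dirac_apply_of_mem (s := {x | f x ≠ g x}) hne] at hnull
  rw [integral_congr_ae hfg, integral_dirac' g a hg, hfg_at]

section

variable {Ω : Type*} [MeasurableSpace Ω]

theorem abs_toReal_sub_le_one (μ ν : Measure Ω) [IsProbabilityMeasure μ]
    [IsProbabilityMeasure ν] (s : Set Ω) : |(μ s).toReal - (ν s).toReal| ≤ 1 :=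
  abs_sub_le_of_nonneg_of_le measureReal_nonneg measureReal_le_one measureReal_nonneg
    measureReal_le_one

theorem bddAbove_range_abs_toReal_sub (μ ν : Measure Ω) [IsProbabilityMeasure μ]
    [IsProbabilityMeasure ν] :
    BddAbove (Set.range fun A : {A : Set Ω // MeasurableSet A} =>
      |(μ A.1).toReal - (ν A.1).toReal|) :=
  ⟨1, by rintro _ ⟨A, rfl⟩; exact abs_toReal_sub_le_one μ ν A.1⟩

theorem tvDist_le_one (μ ν : Measure Ω) [IsProbabilityMeasure μ] [IsProbabilityMeasure ν] :
    tvDist μ ν ≤ 1 :=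
  ciSup_le fun A => abs_toReal_sub_le_one μ ν A.1

theorem abs_toReal_sub_le_tvDist (μ ν : Measure Ω) [IsProbabilityMeasure μ]
    [IsProbabilityMeasure ν] {s : Set Ω} (hs : MeasurableSet s) :
    |(μ s).toReal - (ν s).toReal| ≤ tvDist μ ν :=
  le_ciSup (bddAbove_range_abs_toReal_sub μ ν) ⟨s, hs⟩

theorem tvDist_nonneg (μ ν : Measure Ω) [IsProbabilityMeasure μ] [IsProbabilityMeasure ν] :
    0 ≤ tvDist μ ν :=
  (abs_nonneg _).trans (abs_toReal_sub_le_tvDist μ ν MeasurableSet.univ)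

theorem tvDist_smul_add_smul (μ ν : Measure Ω) [IsFiniteMeasure μ] [IsFiniteMeasure ν]
    {η : ℝ} (hη₀ : 0 ≤ η) (hη₁ : η ≤ 1) :
    tvDist μ (ENNReal.ofReal (1 - η) • μ + ENNReal.ofReal η • ν) = η * tvDist μ ν := by
  rw [tvDist, tvDist, Real.mul_iSup_of_nonneg hη₀]
  refine iSup_congr fun A => ?_
  have hmix : ((ENNReal.ofReal (1 - η) • μ + ENNReal.ofReal η • ν) A.1).toReal =
      (1 - η) * (μ A.1).toReal + η * (ν A.1).toReal := by
    simp [ENNReal.toReal_add, ENNReal.mul_ne_top, ENNReal.toReal_ofReal, hη₀, hη₁]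
  rw [hmix, show (μ A.1).toReal - ((1 - η) * (μ A.1).toReal + η * (ν A.1).toReal) =
    η * ((μ A.1).toReal - (ν A.1).toReal) by ring, abs_mul, abs_of_nonneg hη₀]

variable (Ω) in
noncomputable def probTvDiam : ℝ :=
  ⨆ p : {p : Measure Ω × Measure Ω // IsProbabilityMeasure p.1 ∧ IsProbabilityMeasure p.2},
    tvDist p.1.1 p.1.2

theorem tvDist_le_probTvDiam (μ ν : Measure Ω) [IsProbabilityMeasure μ]
    [IsProbabilityMeasure ν] : tvDist μ ν ≤ probTvDiam Ω :=
  le_ciSup (f := fun p : {p : Measure Ω × Measure Ω //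
      IsProbabilityMeasure p.1 ∧ IsProbabilityMeasure p.2} => tvDist p.1.1 p.1.2)
    ⟨1, by rintro _ ⟨⟨p, hp₁, hp₂⟩, rfl⟩; exact tvDist_le_one p.1 p.2⟩ ⟨(μ, ν), ‹_›, ‹_›⟩

theorem probTvDiam_le_one : probTvDiam Ω ≤ 1 :=
  Real.iSup_le (fun ⟨p, _, _⟩ => tvDist_le_one p.1 p.2) zero_le_one

theorem le_integral_of_forall_le (ν : Measure Ω) [IsProbabilityMeasure ν] {g : Ω → ℝ} {c : ℝ}
    (hg : Integrable g ν) (hc : ∀ y, c ≤ g y) : c ≤ ∫ y, g y ∂ν := by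
  simpa using integral_mono (integrable_const c) hg hc

theorem sub_iInf_le_integral_sub_of_forall_le (J : Measure Ω → ℝ) (g : Ω → ℝ)
    (μ : Measure Ω) [IsProbabilityMeasure μ] {x : Ω} (hx : ∀ y, g x ≤ g y)
    (hg : ∀ ν : Measure Ω, IsProbabilityMeasure ν → Integrable g ν)
    (hJ : ∀ ν : Measure Ω, IsProbabilityMeasure ν → J μ + ((∫ y, g y ∂ν) - ∫ y, g y ∂μ) ≤ J ν) :
    J μ - ⨅ ν : {ν : Measure Ω // IsProbabilityMeasure ν}, J ν.1 ≤ (∫ y, g y ∂μ) - g x := by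
  have : Nonempty {ν : Measure Ω // IsProbabilityMeasure ν} := ⟨⟨μ, ‹_›⟩⟩
  have hJ_x : J μ + (g x - ∫ y, g y ∂μ) ≤ ⨅ ν : {ν : Measure Ω // IsProbabilityMeasure ν}, J ν.1 :=
    le_ciInf fun ⟨ν, hν⟩ => by
      linarith [hJ ν hν, le_integral_of_forall_le ν (hg ν hν) hx]
  linarith

theorem integral_smul_add_smul_dirac {f : Ω → ℝ} {μ : Measure Ω} {x : Ω} {η : ℝ}
    (hη₀ : 0 ≤ η) (hη₁ : η ≤ 1) (hfμ : Integrable f μ) (hfx : Integrable f (Measure.dirac x)) :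
    ∫ y, f y ∂(ENNReal.ofReal (1 - η) • μ + ENNReal.ofReal η • Measure.dirac x) =
      (1 - η) * ∫ y, f y ∂μ + η * f x := by
  rw [integral_add_measure (hfμ.smul_measure ENNReal.ofReal_ne_top)
      (hfx.smul_measure ENNReal.ofReal_ne_top), integral_smul_measure, integral_smul_measure,
    integral_dirac_of_aestronglyMeasurable hfx.1, ENNReal.toReal_ofReal (by linarith),
    ENNReal.toReal_ofReal hη₀, smul_eq_mul, smul_eq_mul]

theorem frankWolfe_step {J : Measure Ω → ℝ} {g : Ω → ℝ} {μ : Measure Ω} [IsProbabilityMeasure μ]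
    {x : Ω} {L R η : ℝ} (hL : 0 ≤ L) (hη₀ : 0 ≤ η) (hη₁ : η ≤ 1) (hx : ∀ y, g x ≤ g y)
    (hg : ∀ ν : Measure Ω, IsProbabilityMeasure ν → Integrable g ν)
    (hJ : ∀ ν : Measure Ω, IsProbabilityMeasure ν → J μ + ((∫ y, g y ∂ν) - ∫ y, g y ∂μ) ≤ J ν)
    {μ' : Measure Ω} (hμ' : μ' = ENNReal.ofReal (1 - η) • μ + ENNReal.ofReal η • Measure.dirac x)
    (hsmooth : J μ' ≤ J μ + ((∫ y, g y ∂μ') - ∫ y, g y ∂μ) + L / 2 * tvDist μ μ' ^ 2)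
    (hR : tvDist μ (Measure.dirac x) ≤ R) :
    J μ' - ⨅ ν : {ν : Measure Ω // IsProbabilityMeasure ν}, J ν.1 ≤
      (1 - η) * (J μ - ⨅ ν : {ν : Measure Ω // IsProbabilityMeasure ν}, J ν.1) +
        L / 2 * η ^ 2 * R ^ 2 := by
  subst hμ'
  have hgap := sub_iInf_le_integral_sub_of_forall_le J g μ hx hg hJ
  have htv : tvDist μ (ENNReal.ofReal (1 - η) • μ + ENNReal.ofReal η • Measure.dirac x) ^ 2 ≤
      η ^ 2 * R ^ 2 := by
    rw [tvDist_smul_add_smul μ _ hη₀ hη₁, mul_pow]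
    gcongr
    exact tvDist_nonneg _ _
  simp only [integral_smul_add_smul_dirac hη₀ hη₁ (hg μ ‹_›) (hg _ inferInstance)] at hsmooth
  nlinarith [mul_le_mul_of_nonneg_left hgap hη₀, mul_le_mul_of_nonneg_left htv hL]

end

theorem le_two_mul_div_of_frankWolfe_recursion {e : ℕ → ℝ} {C : ℝ} (hC : 0 ≤ C)
    (he : ∀ k : ℕ, e (k + 1) ≤ (1 - 2 / ((k : ℝ) + 2)) * e k + C / 2 * (2 / ((k : ℝ) + 2)) ^ 2)
    {k : ℕ} (hk : 1 ≤ k) : e k ≤ 2 * C / ((k : ℝ) + 2) := by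
  induction k, hk using Nat.le_induction with
  | base => linarith [he 0]
  | succ n _ ih =>
    have hn : (0 : ℝ) ≤ n := n.cast_nonneg
    calc e (n + 1) ≤ (1 - 2 / ((n : ℝ) + 2)) * (2 * C / ((n : ℝ) + 2)) +
          C / 2 * (2 / ((n : ℝ) + 2)) ^ 2 := by
          have hη : 0 ≤ 1 - 2 / ((n : ℝ) + 2) := by
            rw [sub_nonneg, div_le_one (by positivity)]; linarith
          grw [he n, ih]
      _ = 2 * C * (n + 1) / ((n : ℝ) + 2) ^ 2 := by field_simp; ring
      _ ≤ 2 * C / (((n + 1 : ℕ) : ℝ) + 2) := by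
          rw [div_le_div_iff₀ (by positivity) (by positivity)]
          push_cast
          nlinarith

theorem stmt7_general {Ω : Type*} [MeasurableSpace Ω]
    (J : Measure Ω → ℝ) (h : Measure Ω → Ω → ℝ) (L : ℝ) (hL : 0 < L)
    (hint : ∀ (μ ν : Measure Ω), IsProbabilityMeasure μ → IsProbabilityMeasure ν →
      Integrable (h μ) ν)
    -- convexity first-order inequality
    (hgrad : ∀ (μ ν : Measure Ω), IsProbabilityMeasure μ → IsProbabilityMeasure ν →
      J μ + ((∫ x, h μ x ∂ν) - ∫ x, h μ x ∂μ) ≤ J ν)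
    -- smooth functional inequality (L-smoothness)
    (hsfi : ∀ (μ ν : Measure Ω), IsProbabilityMeasure μ → IsProbabilityMeasure ν →
      J ν ≤ J μ + ((∫ x, h μ x ∂ν) - ∫ x, h μ x ∂μ) + L / 2 * (tvDist μ ν) ^ 2)
    (μseq : ℕ → Measure Ω) (hprob : ∀ k, IsProbabilityMeasure (μseq k))
    (xstar : ℕ → Ω)
    (hmin : ∀ k, ∀ x : Ω, h (μseq k) (xstar k) ≤ h (μseq k) x)
    (hrec : ∀ k : ℕ, μseq (k + 1) =
      ENNReal.ofReal (1 - 2 / ((k : ℝ) + 2)) • μseq k +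
        ENNReal.ofReal (2 / ((k : ℝ) + 2)) • Measure.dirac (xstar k)) :
    (⨆ p : {p : Measure Ω × Measure Ω //
        IsProbabilityMeasure p.1 ∧ IsProbabilityMeasure p.2}, tvDist p.1.1 p.1.2) ≤ 2 ∧
    ∀ k : ℕ, 1 ≤ k →
      J (μseq k) - (⨅ ν : {ν : Measure Ω // IsProbabilityMeasure ν}, J ν.1) ≤
        2 * L * (⨆ p : {p : Measure Ω × Measure Ω //
            IsProbabilityMeasure p.1 ∧ IsProbabilityMeasure p.2}, tvDist p.1.1 p.1.2) ^ 2 /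
          ((k : ℝ) + 2) := by
  refine ⟨probTvDiam_le_one.trans one_le_two, fun k hk => ?_⟩
  set J_star := ⨅ ν : {ν : Measure Ω // IsProbabilityMeasure ν}, J ν.1
  have hstep (k : ℕ) : J (μseq (k + 1)) - J_star ≤ (1 - 2 / ((k : ℝ) + 2)) * (J (μseq k) - J_star) +
      L * probTvDiam Ω ^ 2 / 2 * (2 / ((k : ℝ) + 2)) ^ 2 := by
    have hη₁ : 2 / ((k : ℝ) + 2) ≤ 1 := by
      rw [div_le_one (by positivity)]; linarith [k.cast_nonneg (α := ℝ)]
    have := frankWolfe_step (μ := μseq k) hL.le (by positivity) hη₁ (hmin k)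
      (hint _ · (hprob k) ·) (hgrad _ · (hprob k) ·) (hrec k)
      (hsfi _ _ (hprob k) (hprob (k + 1))) (tvDist_le_probTvDiam _ _)
    linarith
  have := le_two_mul_div_of_frankWolfe_recursion (e := fun k => J (μseq k) - J_star)
    (by positivity) hstep hk
  simpa only [mul_assoc, probTvDiam] using this

/-- Deterministic Frank–Wolfe complexity on probability spaces: with the smooth
functional inequality, the convexity gradient inequality, step sizes `η_k = 2/(k+2)` and
iterates `μ_{k+1} = (1-η_k)μ_k + η_k δ_{x*(μ_k)}` where `x*(μ_k)` minimizes the influence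
function `h (μ k)`, we have `J(μ_k) - J* ≤ 2LR²/(k+2)` for all `k ≥ 1`, with
`J* = inf J` over `P(X)` and `R = sup ‖μ-ν‖_TV ≤ 2`. -/
theorem stmt7 {Ω : Type*} [MeasurableSpace Ω] [TopologicalSpace Ω] [CompactSpace Ω]
    [BorelSpace Ω] [Nonempty Ω]
    (J : Measure Ω → ℝ) (h : Measure Ω → Ω → ℝ) (L : ℝ) (hL : 0 < L)
    (hint : ∀ (μ ν : Measure Ω), IsProbabilityMeasure μ → IsProbabilityMeasure ν →
      Integrable (h μ) ν)
    -- convexity first-order inequality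
    (hgrad : ∀ (μ ν : Measure Ω), IsProbabilityMeasure μ → IsProbabilityMeasure ν →
      J μ + ((∫ x, h μ x ∂ν) - ∫ x, h μ x ∂μ) ≤ J ν)
    -- smooth functional inequality (L-smoothness)
    (hsfi : ∀ (μ ν : Measure Ω), IsProbabilityMeasure μ → IsProbabilityMeasure ν →
      J ν ≤ J μ + ((∫ x, h μ x ∂ν) - ∫ x, h μ x ∂μ) + L / 2 * (tvDist μ ν) ^ 2)
    (μseq : ℕ → Measure Ω) (hprob : ∀ k, IsProbabilityMeasure (μseq k))
    (xstar : ℕ → Ω)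
    (hmin : ∀ k, ∀ x : Ω, h (μseq k) (xstar k) ≤ h (μseq k) x)
    (hrec : ∀ k : ℕ, μseq (k + 1) =
      ENNReal.ofReal (1 - 2 / ((k : ℝ) + 2)) • μseq k +
        ENNReal.ofReal (2 / ((k : ℝ) + 2)) • Measure.dirac (xstar k)) :
    (⨆ p : {p : Measure Ω × Measure Ω //
        IsProbabilityMeasure p.1 ∧ IsProbabilityMeasure p.2}, tvDist p.1.1 p.1.2) ≤ 2 ∧
    ∀ k : ℕ, 1 ≤ k →
      J (μseq k) - (⨅ ν : {ν : Measure Ω // IsProbabilityMeasure ν}, J ν.1) ≤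
        2 * L * (⨆ p : {p : Measure Ω × Measure Ω //
            IsProbabilityMeasure p.1 ∧ IsProbabilityMeasure p.2}, tvDist p.1.1 p.1.2) ^ 2 /
          ((k : ℝ) + 2) :=
  stmt7_general J h L hL hint hgrad hsfi μseq hprob xstar hmin hrec
end

section
/- Supermartingale property: let (Δ_k) be a nonnegative adapted sequence with E[Δ_{k+1} | F_k] ≤ (1 − 2/(k+2))Δ_k + 4LR²/(k+2)² for k ≥ 1, and fix δ ∈ (0,1). Then M_k := k^{1−δ}Δ_k + Σ_{j=k}^∞ 4LR²/(j+1)^{1+δ} defines a nonnegative supermartingale with respect to (F_k), i.e., E[M_{k+1} | F_k] ≤ M_k for all k ≥ 1. -/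
open MeasureTheory Filter Topology

/-! With `c_k = k^{1-δ}` and `T_k = Σ_{j ≥ k} 4LR²/(j+1)^{1+δ}`, multiplying the recursion by
`c_{k+1}` gives `E[c_{k+1}Δ_{k+1} | F_k] ≤ c_{k+1}(1 - 2/(k+2))Δ_k + c_{k+1}·4LR²/(k+2)²`.
The first coefficient is at most `c_k` and the second term at most `4LR²/(k+1)^{1+δ}`,
which is exactly `T_k - T_{k+1}`; hence `E[M_{k+1} | F_k] ≤ M_k`. -/

theorem tsum_nat_add_eq_add_tsum {f : ℕ → ℝ} (hf : Summable f) (k : ℕ) :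
    ∑' j, f (k + j) = f k + ∑' j, f (k + 1 + j) := by
  have htail : Summable fun j => f (k + j) :=
    ((summable_nat_add_iff k).2 hf).congr fun j => by rw [add_comm]
  rw [htail.tsum_eq_zero_add, add_zero]
  exact congrArg (f k + ·) (tsum_congr fun j => congrArg f (by omega))

section CondExp

variable {Ω : Type*} {m m0 : MeasurableSpace Ω} {μ : Measure Ω} [IsFiniteMeasure μ]
  {g h : Ω → ℝ}

theorem condExp_mul_add_const (hm : m ≤ m0) (hg : Integrable g μ) (c C : ℝ) :
    μ[fun ω => c * g ω + C|m] =ᵐ[μ] fun ω => c * μ[g|m] ω + C := by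
  filter_upwards [condExp_add (hg.const_mul c) (integrable_const C) m,
    condExp_smul (μ := μ) c g m] with ω hadd hsmul
  rw [show (fun ω => c * g ω + C) = (fun ω => c * g ω) + fun _ => C from rfl, hadd,
    Pi.add_apply, condExp_const hm]
  exact congrArg (· + C) hsmul

theorem condExp_mul_add_const_le (hm : m ≤ m0) (hg : Integrable g μ) {c : ℝ} (hc : 0 ≤ c)
    (C : ℝ) (hgh : μ[g|m] ≤ᵐ[μ] h) :
    μ[fun ω => c * g ω + C|m] ≤ᵐ[μ] fun ω => c * h ω + C := by
  filter_upwards [condExp_mul_add_const hm hg c C, hgh] with ω heq hle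
  rw [heq]
  gcongr

end CondExp

namespace Real

theorem add_one_rpow_mul_one_sub_two_div_le {x a : ℝ} (hx : 0 < x) (ha : a ≤ 1) :
    (x + 1) ^ a * (1 - 2 / (x + 2)) ≤ x ^ a := by
  have hratio : ((x + 1) / x) ^ a ≤ (x + 1) / x := by
    have h1 : 1 ≤ (x + 1) / x := by rw [le_div_iff₀ hx]; linarith
    simpa using rpow_le_rpow_of_exponent_le h1 ha
  have hsplit : (x + 1) ^ a = x ^ a * ((x + 1) / x) ^ a := by
    rw [← mul_rpow hx.le (by positivity), mul_div_cancel₀ _ hx.ne']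
  calc (x + 1) ^ a * (1 - 2 / (x + 2))
      = x ^ a * ((x + 1) / x) ^ a * (x / (x + 2)) := by
        rw [hsplit]; field_simp; ring
    _ ≤ x ^ a * ((x + 1) / x) * (x / (x + 2)) := by gcongr
    _ = x ^ a * ((x + 1) / (x + 2)) := by field_simp
    _ ≤ x ^ a := by
        apply mul_le_of_le_one_right (by positivity)
        rw [div_le_one (by linarith)]; linarith

theorem add_one_rpow_mul_div_sq_le {x b c : ℝ} (hx : 0 ≤ x) (hc : 0 ≤ c) :
    (x + 1) ^ (1 - b) * (c / (x + 2) ^ 2) ≤ c / (x + 1) ^ (1 + b) := by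
  have hsq : (x + 1) ^ (1 - b) * (x + 1) ^ (1 + b) = (x + 1) ^ 2 := by
    rw [← rpow_add (by linarith)]; norm_num
  calc (x + 1) ^ (1 - b) * (c / (x + 2) ^ 2) ≤ (x + 1) ^ (1 - b) * (c / (x + 1) ^ 2) := by
        gcongr; linarith
    _ = c / (x + 1) ^ (1 + b) := by
        rw [← hsq]; field_simp

end Real

theorem stmt19_general {Θ : Type*} {m0 : MeasurableSpace Θ}
    (Pr : Measure Θ) [IsProbabilityMeasure Pr]
    (F : Filtration ℕ m0) (Δ : ℕ → Θ → ℝ)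
    (hint : ∀ k, Integrable (Δ k) Pr)
    (hnonneg : ∀ k ω, 0 ≤ Δ k ω)
    (L R δ : ℝ) (hL : 0 < L) (hδ : δ ∈ Set.Ioo (0:ℝ) 1)
    (hrec : ∀ k : ℕ, 1 ≤ k →
      Pr[Δ (k + 1)|F k] ≤ᵐ[Pr] fun ω =>
        (1 - 2 / ((k : ℝ) + 2)) * Δ k ω + 4 * L * R ^ 2 / ((k : ℝ) + 2) ^ 2) :
    (∀ k : ℕ, ∀ ω : Θ, 0 ≤ (k : ℝ) ^ ((1:ℝ) - δ) * Δ k ω +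
        ∑' j : ℕ, 4 * L * R ^ 2 / (((k + j : ℕ) : ℝ) + 1) ^ ((1:ℝ) + δ)) ∧
    (∀ k : ℕ, 1 ≤ k →
      Pr[fun ω => ((k + 1 : ℕ) : ℝ) ^ ((1:ℝ) - δ) * Δ (k + 1) ω +
          ∑' j : ℕ, 4 * L * R ^ 2 / (((k + 1 + j : ℕ) : ℝ) + 1) ^ ((1:ℝ) + δ)|F k]
        ≤ᵐ[Pr] fun ω => (k : ℝ) ^ ((1:ℝ) - δ) * Δ k ω +
          ∑' j : ℕ, 4 * L * R ^ 2 / (((k + j : ℕ) : ℝ) + 1) ^ ((1:ℝ) + δ)) := by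
  obtain ⟨hδ0, hδ1⟩ := hδ
  set f : ℕ → ℝ := fun n => 4 * L * R ^ 2 / ((n : ℝ) + 1) ^ ((1:ℝ) + δ)
  have hf : Summable f := by
    have := (Real.summable_one_div_nat_rpow.2 (by linarith : (1:ℝ) < 1 + δ)).mul_left
      (4 * L * R ^ 2)
    exact ((summable_nat_add_iff 1).2 this).congr fun n => by push_cast [f]; ring
  refine ⟨fun k ω => add_nonneg (mul_nonneg (by positivity) (hnonneg k ω))
    (tsum_nonneg fun j => by positivity), fun k hk => ?_⟩
  filter_upwards [condExp_mul_add_const_le (F.le k) (hint (k + 1))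
    (by positivity : 0 ≤ ((k + 1 : ℕ) : ℝ) ^ (1 - δ)) (∑' j, f (k + 1 + j)) (hrec k hk)]
    with ω hω
  have hk_pos : (0 : ℝ) < k := by exact_mod_cast hk
  have hcoef := Real.add_one_rpow_mul_one_sub_two_div_le hk_pos (by linarith : 1 - δ ≤ 1)
  have hconst := Real.add_one_rpow_mul_div_sq_le (b := δ) hk_pos.le
    (by positivity : 0 ≤ 4 * L * R ^ 2)
  refine hω.trans ?_
  rw [tsum_nat_add_eq_add_tsum hf k]
  push_cast [f]
  linarith [mul_le_mul_of_nonneg_right hcoef (hnonneg k ω)]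

/-- Supermartingale property underlying the a.s. convergence rate of sFW: if the
nonnegative adapted sequence `Δ` satisfies
`E[Δ_{k+1} | F_k] ≤ (1 - 2/(k+2))Δ_k + 4LR²/(k+2)²` for `k ≥ 1`, then
`M_k = k^{1-δ}Δ_k + Σ_{j≥k} 4LR²/(j+1)^{1+δ}` is a nonnegative supermartingale. -/
theorem stmt19 {Θ : Type*} {m0 : MeasurableSpace Θ}
    (Pr : Measure Θ) [IsProbabilityMeasure Pr]
    (F : Filtration ℕ m0) (Δ : ℕ → Θ → ℝ)
    (hadapt : Adapted F Δ)
    (hint : ∀ k, Integrable (Δ k) Pr)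
    (hnonneg : ∀ k ω, 0 ≤ Δ k ω)
    (L R δ : ℝ) (hL : 0 < L) (hR : 0 < R) (hδ : δ ∈ Set.Ioo (0:ℝ) 1)
    (hrec : ∀ k : ℕ, 1 ≤ k →
      Pr[Δ (k + 1)|F k] ≤ᵐ[Pr] fun ω =>
        (1 - 2 / ((k : ℝ) + 2)) * Δ k ω + 4 * L * R ^ 2 / ((k : ℝ) + 2) ^ 2) :
    (∀ k : ℕ, ∀ ω : Θ, 0 ≤ (k : ℝ) ^ ((1:ℝ) - δ) * Δ k ω +
        ∑' j : ℕ, 4 * L * R ^ 2 / (((k + j : ℕ) : ℝ) + 1) ^ ((1:ℝ) + δ)) ∧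
    (∀ k : ℕ, 1 ≤ k →
      Pr[fun ω => ((k + 1 : ℕ) : ℝ) ^ ((1:ℝ) - δ) * Δ (k + 1) ω +
          ∑' j : ℕ, 4 * L * R ^ 2 / (((k + 1 + j : ℕ) : ℝ) + 1) ^ ((1:ℝ) + δ)|F k]
        ≤ᵐ[Pr] fun ω => (k : ℝ) ^ ((1:ℝ) - δ) * Δ k ω +
          ∑' j : ℕ, 4 * L * R ^ 2 / (((k + j : ℕ) : ℝ) + 1) ^ ((1:ℝ) + δ)) :=
  stmt19_general Pr F Δ hint hnonneg L R δ hL hδ hrec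
end
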